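/- Let $1 \le p, q < \infty$ with $p \ge q \ge 2$. Then every block sequence $(f_j)$ of the biparameter Haar system in $H^p(H^q)$ satisfies the lower $p$-estimate with constant $1$: $\|\sum_{j=1}^n f_j\|_{H^p(H^q)} \ge (\sum_{j=1}^n \|f_j\|_{H^p(H^q)}^p)^{1/p}$. -/

import Mathlib

/-! Disjointness of the Haar spectra gives `(𝕊 ∑ⱼ fⱼ)² = ∑ⱼ (𝕊 fⱼ)²` pointwise. After raising to
the `p`-th power the claim becomes `∑ⱼ ∫ (∫ Gⱼ ^ (q/2)) ^ (p/q) ≤ ∫ (∫ (∑ⱼ Gⱼ) ^ (q/2)) ^ (p/q)`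
with `Gⱼ = (𝕊 fⱼ)²`, and this follows from superadditivity of `t ↦ t ^ r` for `r ≥ 1`, used with
`r = q/2` pointwise under the inner integral and with `r = p/q` after it. -/

open Finset MeasureTheory

/-- The `L^∞`-normalized Haar function on the dyadic interval `[k/2^n, (k+1)/2^n)`. -/
noncomputable def haar (n k : ℕ) (x : ℝ) : ℝ :=
  if (k : ℝ) / 2 ^ n ≤ x ∧ x < ((k : ℝ) + 1 / 2) / 2 ^ n then 1
  else if ((k : ℝ) + 1 / 2) / 2 ^ n ≤ x ∧ x < ((k : ℝ) + 1) / 2 ^ n then -1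
  else 0

/-- The biparameter Haar function `h_{I,J}(x,y) = h_I(x) h_J(y)`. -/
noncomputable def haar2 (I J : ℕ × ℕ) (x y : ℝ) : ℝ := haar I.1 I.2 x * haar J.1 J.2 y

/-- The `H^p(H^q)` (mixed-norm Hardy space) norm of the finite linear combination
`∑_{IJ ∈ s} a IJ • h_{IJ}` of biparameter Haar functions, given by the square function formula
`(∫₀¹ (∫₀¹ (∑_{IJ ∈ s} a_{IJ}² h_{IJ}²(x,y))^{q/2} dy)^{p/q} dx)^{1/p}`. -/
noncomputable def HpHqNorm (p q : ℝ) (s : Finset ((ℕ × ℕ) × (ℕ × ℕ)))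
    (a : (ℕ × ℕ) × (ℕ × ℕ) → ℝ) : ℝ :=
  (∫ x in Set.Icc (0 : ℝ) 1,
      (∫ y in Set.Icc (0 : ℝ) 1,
        (∑ IJ ∈ s, (a IJ * haar2 IJ.1 IJ.2 x y) ^ 2) ^ (q / 2)) ^ (p / q)) ^ (1 / p)

lemma measurable_haar (n k : ℕ) : Measurable (haar n k) := by
  unfold haar
  exact Measurable.ite measurableSet_Ico measurable_const
    (Measurable.ite measurableSet_Ico measurable_const measurable_const)

lemma sq_haar_le_one (n k : ℕ) (x : ℝ) : haar n k x ^ 2 ≤ 1 := by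
  unfold haar; split_ifs <;> norm_num

lemma sq_haar2_le_one (I J : ℕ × ℕ) (x y : ℝ) : haar2 I J x y ^ 2 ≤ 1 := by
  rw [haar2, mul_pow]
  exact mul_le_one₀ (sq_haar_le_one _ _ _) (sq_nonneg _) (sq_haar_le_one _ _ _)

lemma Real.sum_rpow_le_rpow_sum {ι : Type*} (t : Finset ι) {f : ι → ℝ}
    (hf : ∀ i ∈ t, 0 ≤ f i) {r : ℝ} (hr : 1 ≤ r) :
    ∑ i ∈ t, f i ^ r ≤ (∑ i ∈ t, f i) ^ r := by
  classical
  induction t using Finset.induction_on with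
  | empty => simp [Real.zero_rpow (by linarith : r ≠ 0)]
  | insert i t hi ih =>
    have hft : ∀ j ∈ t, 0 ≤ f j := fun j hj => hf j (mem_insert_of_mem hj)
    rw [sum_insert hi, sum_insert hi]
    calc f i ^ r + ∑ j ∈ t, f j ^ r ≤ f i ^ r + (∑ j ∈ t, f j) ^ r := by gcongr; exact ih hft
      _ ≤ (f i + ∑ j ∈ t, f j) ^ r :=
        Real.add_rpow_le_rpow_add (hf i (mem_insert_self i t)) (sum_nonneg hft) hr

section MixedIntegral

variable {α β ι : Type*} [MeasurableSpace α] [MeasurableSpace β] {μ : Measure α} {ν : Measure β}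

noncomputable def mixedIntegral (μ : Measure α) (ν : Measure β) (r r' : ℝ)
    (G : α → β → ℝ) : ℝ :=
  ∫ x, (∫ y, G x y ^ r ∂ν) ^ r' ∂μ

lemma mixedIntegral_nonneg {G : α → β → ℝ} (hG0 : ∀ x y, 0 ≤ G x y) (r r' : ℝ) :
    0 ≤ mixedIntegral μ ν r r' G :=
  integral_nonneg fun x =>
    Real.rpow_nonneg (integral_nonneg fun y => Real.rpow_nonneg (hG0 x y) r) r'

lemma sum_integral_le_integral_of_sum_le (t : Finset ι) {f : ι → α → ℝ} {g : α → ℝ}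
    (hf : ∀ i ∈ t, Integrable (f i) μ) (hg : Integrable g μ) (hfg : ∀ x, ∑ i ∈ t, f i x ≤ g x) :
    ∑ i ∈ t, ∫ x, f i x ∂μ ≤ ∫ x, g x ∂μ := by
  rw [← integral_finsetSum t hf]
  exact integral_mono (integrable_finsetSum t hf) hg hfg

variable [IsFiniteMeasure μ] [IsFiniteMeasure ν]

lemma integrable_rpow_of_bounded {f : α → ℝ} (hf : Measurable f) (hf0 : ∀ x, 0 ≤ f x) {C : ℝ}
    (hfC : ∀ x, f x ≤ C) {r : ℝ} (hr : 0 ≤ r) : Integrable (fun x => f x ^ r) μ := by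
  refine .of_bound (hf.pow_const r).aestronglyMeasurable (C ^ r) (.of_forall fun x => ?_)
  rw [Real.norm_of_nonneg (Real.rpow_nonneg (hf0 x) r)]
  exact Real.rpow_le_rpow (hf0 x) (hfC x) hr

lemma integral_rpow_le_of_bounded {f : α → ℝ} (hf0 : ∀ x, 0 ≤ f x) {C : ℝ}
    (hfC : ∀ x, f x ≤ C) {r : ℝ} (hr : 0 ≤ r) : ∫ x, f x ^ r ∂μ ≤ C ^ r * μ.real Set.univ := by
  refine (Real.le_norm_self _).trans (norm_integral_le_of_norm_le_const (.of_forall fun x => ?_))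
  rw [Real.norm_of_nonneg (Real.rpow_nonneg (hf0 x) r)]
  exact Real.rpow_le_rpow (hf0 x) (hfC x) hr

lemma sum_integral_rpow_le_integral_rpow_sum (t : Finset ι) {f : ι → α → ℝ}
    (hf : ∀ i ∈ t, Measurable (f i)) (hf0 : ∀ i ∈ t, ∀ x, 0 ≤ f i x) {C : ι → ℝ}
    (hfC : ∀ i ∈ t, ∀ x, f i x ≤ C i) {r : ℝ} (hr : 1 ≤ r) :
    ∑ i ∈ t, ∫ x, f i x ^ r ∂μ ≤ ∫ x, (∑ i ∈ t, f i x) ^ r ∂μ := by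
  have hsum : Measurable fun x => ∑ i ∈ t, f i x := Finset.measurable_sum t hf
  refine sum_integral_le_integral_of_sum_le t
    (fun i hi => integrable_rpow_of_bounded (hf i hi) (hf0 i hi) (hfC i hi) (by linarith))
    (integrable_rpow_of_bounded hsum (fun x => sum_nonneg fun i hi => hf0 i hi x)
      (fun x => sum_le_sum fun i hi => hfC i hi x) (by linarith))
    fun x => Real.sum_rpow_le_rpow_sum t (fun i hi => hf0 i hi x) hr

lemma integrable_mixedIntegrand {G : α → β → ℝ} (hG : Measurable (Function.uncurry G))
    (hG0 : ∀ x y, 0 ≤ G x y) {C : ℝ} (hGC : ∀ x y, G x y ≤ C) {r r' : ℝ} (hr : 0 ≤ r)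
    (hr' : 0 ≤ r') : Integrable (fun x => (∫ y, G x y ^ r ∂ν) ^ r') μ := by
  have hinner : Measurable fun x => ∫ y, G x y ^ r ∂ν :=
    (hG.pow_const r).stronglyMeasurable.integral_prod_right'.measurable
  exact integrable_rpow_of_bounded hinner
    (fun x => integral_nonneg fun y => Real.rpow_nonneg (hG0 x y) r)
    (fun x => integral_rpow_le_of_bounded (hG0 x) (hGC x) hr) hr'

lemma sum_mixedIntegral_le_mixedIntegral_sum (t : Finset ι) {G : ι → α → β → ℝ}
    (hG : ∀ i ∈ t, Measurable (Function.uncurry (G i))) (hG0 : ∀ i ∈ t, ∀ x y, 0 ≤ G i x y)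
    {C : ι → ℝ} (hGC : ∀ i ∈ t, ∀ x y, G i x y ≤ C i) {r r' : ℝ} (hr : 1 ≤ r) (hr' : 1 ≤ r') :
    ∑ i ∈ t, mixedIntegral μ ν r r' (G i) ≤
      mixedIntegral μ ν r r' (fun x y => ∑ i ∈ t, G i x y) := by
  have hsum : Measurable (Function.uncurry fun x y => ∑ i ∈ t, G i x y) :=
    Finset.measurable_sum t hG
  have hsum0 : ∀ x y, 0 ≤ ∑ i ∈ t, G i x y := fun x y => sum_nonneg fun i hi => hG0 i hi x y
  have hinner0 : ∀ i ∈ t, ∀ x, 0 ≤ ∫ y, G i x y ^ r ∂ν := fun i hi x =>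
    integral_nonneg fun y => Real.rpow_nonneg (hG0 i hi x y) r
  refine sum_integral_le_integral_of_sum_le t
    (fun i hi => integrable_mixedIntegrand (hG i hi) (hG0 i hi) (hGC i hi) (by linarith)
      (by linarith))
    (integrable_mixedIntegrand hsum hsum0 (fun x y => sum_le_sum fun i hi => hGC i hi x y)
      (by linarith) (by linarith)) fun x => ?_
  calc ∑ i ∈ t, (∫ y, G i x y ^ r ∂ν) ^ r'
      ≤ (∑ i ∈ t, ∫ y, G i x y ^ r ∂ν) ^ r' :=
        Real.sum_rpow_le_rpow_sum t (fun i hi => hinner0 i hi x) hr'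
    _ ≤ (∫ y, (∑ i ∈ t, G i x y) ^ r ∂ν) ^ r' := by
        gcongr
        · exact sum_nonneg fun i hi => hinner0 i hi x
        · exact sum_integral_rpow_le_integral_rpow_sum t
            (fun i hi => (hG i hi).comp measurable_prodMk_left) (fun i hi => hG0 i hi x)
            (fun i hi => hGC i hi x) hr

end MixedIntegral

/-- `(𝕊 f)²` for `f = ∑_{IJ ∈ s} a IJ • h_{IJ}`. -/
noncomputable def squareFunctionSq (s : Finset ((ℕ × ℕ) × (ℕ × ℕ)))
    (a : (ℕ × ℕ) × (ℕ × ℕ) → ℝ) (x y : ℝ) : ℝ :=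
  ∑ IJ ∈ s, (a IJ * haar2 IJ.1 IJ.2 x y) ^ 2

section SquareFunction

variable (s : Finset ((ℕ × ℕ) × (ℕ × ℕ))) (a : (ℕ × ℕ) × (ℕ × ℕ) → ℝ)

lemma squareFunctionSq_nonneg (x y : ℝ) : 0 ≤ squareFunctionSq s a x y :=
  sum_nonneg fun _ _ => sq_nonneg _

lemma HpHqNorm_eq_mixedIntegral (p q : ℝ) :
    HpHqNorm p q s a = mixedIntegral (volume.restrict (Set.Icc 0 1))
      (volume.restrict (Set.Icc 0 1)) (q / 2) (p / q) (squareFunctionSq s a) ^ (1 / p) :=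
  rfl

lemma HpHqNorm_rpow_eq_mixedIntegral {p : ℝ} (hp : p ≠ 0) (q : ℝ) :
    HpHqNorm p q s a ^ p = mixedIntegral (volume.restrict (Set.Icc 0 1))
      (volume.restrict (Set.Icc 0 1)) (q / 2) (p / q) (squareFunctionSq s a) := by
  rw [HpHqNorm_eq_mixedIntegral, ← Real.rpow_mul
    (mixedIntegral_nonneg (squareFunctionSq_nonneg s a) _ _), one_div_mul_cancel hp,
    Real.rpow_one]

lemma measurable_squareFunctionSq : Measurable (Function.uncurry (squareFunctionSq s a)) :=
  Finset.measurable_sum s fun _ _ => (measurable_const.mul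
    (((measurable_haar _ _).comp measurable_fst).mul
      ((measurable_haar _ _).comp measurable_snd))).pow_const 2

lemma squareFunctionSq_le (x y : ℝ) : squareFunctionSq s a x y ≤ ∑ IJ ∈ s, a IJ ^ 2 :=
  sum_le_sum fun _ _ => by
    rw [mul_pow]
    exact mul_le_of_le_one_right (sq_nonneg _) (sq_haar2_le_one _ _ _ _)

end SquareFunction

lemma squareFunctionSq_biUnion {ι : Type*} (t : Finset ι) (s : ι → Finset ((ℕ × ℕ) × (ℕ × ℕ)))
    (a : ι → (ℕ × ℕ) × (ℕ × ℕ) → ℝ) (hs : (t : Set ι).PairwiseDisjoint s) :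
    squareFunctionSq (t.biUnion s) (fun IJ => ∑ j ∈ t, if IJ ∈ s j then a j IJ else 0) =
      fun x y => ∑ j ∈ t, squareFunctionSq (s j) (a j) x y := by
  ext x y
  rw [squareFunctionSq, sum_biUnion hs]
  refine sum_congr rfl fun j hj => sum_congr rfl fun IJ hIJ => ?_
  rw [sum_eq_single_of_mem j hj fun i hi hij => if_neg fun h =>
    Finset.disjoint_left.mp (hs hi hj hij) h hIJ, if_pos hIJ]

theorem lower_p_estimate_HpHq_of_two_le_q_general (p q : ℝ) (hq : 2 ≤ q) (hpq : q ≤ p)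
    (n : ℕ) (s : Fin n → Finset ((ℕ × ℕ) × (ℕ × ℕ)))
    (a : Fin n → (ℕ × ℕ) × (ℕ × ℕ) → ℝ)
    (hdisj : ∀ i j, i ≠ j → Disjoint (s i) (s j)) :
    (∑ j, HpHqNorm p q (s j) (a j) ^ p) ^ (1 / p)
      ≤ HpHqNorm p q (Finset.univ.biUnion s)
          (fun IJ => ∑ j, if IJ ∈ s j then a j IJ else 0) := by
  set μ := volume.restrict (Set.Icc (0 : ℝ) 1)
  have hp : 0 < p := by linarith
  calc (∑ j, HpHqNorm p q (s j) (a j) ^ p) ^ (1 / p)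
      = (∑ j, mixedIntegral μ μ (q / 2) (p / q) (squareFunctionSq (s j) (a j))) ^ (1 / p) := by
        congr 1
        exact sum_congr rfl fun j _ => HpHqNorm_rpow_eq_mixedIntegral _ _ hp.ne' q
    _ ≤ (mixedIntegral μ μ (q / 2) (p / q)
          fun x y => ∑ j, squareFunctionSq (s j) (a j) x y) ^ (1 / p) := by
        refine Real.rpow_le_rpow (sum_nonneg fun j _ =>
          mixedIntegral_nonneg (squareFunctionSq_nonneg _ _) _ _) ?_ (one_div_nonneg.mpr hp.le)
        exact sum_mixedIntegral_le_mixedIntegral_sum univ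
          (fun j _ => measurable_squareFunctionSq _ _)
          (fun j _ => squareFunctionSq_nonneg _ _) (fun j _ => squareFunctionSq_le _ _)
          (by linarith) ((one_le_div (by linarith)).mpr hpq)
    _ = _ := by
        rw [HpHqNorm_eq_mixedIntegral,
          squareFunctionSq_biUnion univ s a fun i _ j _ hij => hdisj i j hij]

/-- Lower `p`-estimate with constant 1 for block sequences (disjoint Haar spectra)
in `H^p(H^q)`, `p ≥ q ≥ 2`. -/
theorem lower_p_estimate_HpHq_of_two_le_q (p q : ℝ) (hq : 2 ≤ q) (hpq : q ≤ p)
    (n : ℕ) (s : Fin n → Finset ((ℕ × ℕ) × (ℕ × ℕ)))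
    (a : Fin n → (ℕ × ℕ) × (ℕ × ℕ) → ℝ)
    (hdisj : ∀ i j, i ≠ j → Disjoint (s i) (s j))
    (hnonzero : ∀ j, ∃ IJ ∈ s j, a j IJ ≠ 0) :
    (∑ j, HpHqNorm p q (s j) (a j) ^ p) ^ (1 / p)
      ≤ HpHqNorm p q (Finset.univ.biUnion s)
          (fun IJ => ∑ j, if IJ ∈ s j then a j IJ else 0) :=
  lower_p_estimate_HpHq_of_two_le_q_general p q hq hpq n s a hdisj
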